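/- Let R be a Prüfer domain and let ⋆ be a stable semistar operation on R, with normalized stable version ⋆̃. Then QSpec^⋆̃(R) = QSpec^⋆(R) and PsSpec^⋆̃(R) = PsSpec^⋆(R); consequently, the normalized stable version of ⋆̃ equals ⋆̃. -/

import Mathlib

open Pointwise

section Defs

variable {R : Type*} (K : Type*) [CommRing R] [IsDomain R] [Field K] [Algebra R K]
  [IsFractionRing R K]

/-- A function `f` on the `R`-submodules of the quotient field `K` is a semistar operation if it
is extensive, idempotent, monotone and commutes with scaling by elements of `K`. -/
def IsSemistarOperation (f : Submodule R K → Submodule R K) : Prop :=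
  (∀ I : Submodule R K, I ≤ f I) ∧
  (∀ I : Submodule R K, f (f I) = f I) ∧
  (∀ I J : Submodule R K, I ≤ J → f I ≤ f J) ∧
  (∀ (x : K) (I : Submodule R K), f (x • I) = x • f I)

/-- A semistar operation is stable if it distributes over finite intersections. -/
def IsStableOperation (f : Submodule R K → Submodule R K) : Prop :=
  ∀ I J : Submodule R K, f (I ⊓ J) = f I ⊓ f J

/-- An ideal of `R`, viewed as an `R`-submodule of the quotient field `K`. -/
def idealToK (I : Ideal R) : Submodule R K :=
  Submodule.map (Algebra.linearMap R K) I

/-- A Prüfer domain is an integral domain in which every nonzero finitely generated ideal is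
invertible (as a fractional ideal, i.e. as a submodule of the quotient field). -/
def IsPruferDomain : Prop :=
  ∀ I : Ideal R, I ≠ ⊥ → I.FG → ∃ J : Submodule R K, idealToK K I * J = 1

/-- The localization `R_P` of `R` at the prime `P`, viewed as an `R`-submodule of the quotient
field `K`. -/
noncomputable def locSub (P : Ideal R) (hP : P.IsPrime) : Submodule R K :=
  haveI := hP
  Subalgebra.toSubmodule
    (Localization.subalgebra K P.primeCompl
      (fun x hx => mem_nonZeroDivisors_of_ne_zero (fun h0 => hx (h0 ▸ P.zero_mem))))

/-- The `v`-operation of the valuation ring `R_P`, applied to the `R_P`-submodule of `K`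
generated by (the image of) `I`: it sends `I` to `(R_P : (R_P : IR_P))`. -/
noncomputable def vOp (P : Ideal R) (hP : P.IsPrime) (I : Submodule R K) : Submodule R K :=
  locSub K P hP / (locSub K P hP / (I * locSub K P hP))

/-- The quasi-spectrum of a (stable) semistar operation: the set of primes `P` such that
`P^⋆ ∩ R = P`. -/
def QSpec (f : Submodule R K → Submodule R K) : Set (Ideal R) :=
  {P | P.IsPrime ∧ f (idealToK K P) ⊓ 1 = idealToK K P}

/-- The pseudo-spectrum of a stable semistar operation: the set of primes `P` such that
`P^⋆ ∩ R = R` and `L^⋆ ∩ R = L` for some `P`-primary ideal `L`. -/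
def PsSpec (f : Submodule R K → Submodule R K) : Set (Ideal R) :=
  {P | P.IsPrime ∧ f (idealToK K P) ⊓ 1 = 1 ∧
    ∃ L : Ideal R, L.IsPrimary ∧ L.radical = P ∧ f (idealToK K L) ⊓ 1 = idealToK K L}

/-- The normalized stable version of a stable semistar operation `f`:
`I ↦ ⋂ {IR_P : P ∈ QSpec} ∩ ⋂ {(IR_P)^{v_{R_P}} : P ∈ PsSpec}`. -/
noncomputable def normStable (f : Submodule R K → Submodule R K) (I : Submodule R K) :
    Submodule R K :=
  (⨅ P : QSpec K f, I * locSub K P.1 P.2.1) ⊓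
    ⨅ P : PsSpec K f, vOp K P.1 P.2.1 I

end Defs

set_option linter.unusedSectionVars false
set_option linter.unusedVariables false

section Aux

variable {R K : Type*} [CommRing R] [IsDomain R] [Field K] [Algebra R K] [IsFractionRing R K]

theorem alg_inj : Function.Injective (algebraMap R K) := IsFractionRing.injective R K

theorem mem_idealToK {I : Ideal R} {x : K} :
    x ∈ idealToK K I ↔ ∃ r ∈ I, algebraMap R K r = x := by
  simp [idealToK, Submodule.mem_map, Algebra.linearMap_apply]

theorem alg_mem_idealToK {I : Ideal R} {r : R} :
    algebraMap R K r ∈ idealToK K I ↔ r ∈ I := by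
  rw [mem_idealToK]
  constructor
  · rintro ⟨s, hs, h⟩; rwa [← alg_inj h]
  · exact fun h => ⟨r, h, rfl⟩

theorem idealToK_le_one (I : Ideal R) : idealToK K I ≤ (1 : Submodule R K) := by
  intro x hx
  obtain ⟨r, _, h⟩ := mem_idealToK.1 hx
  exact Submodule.mem_one.2 ⟨r, h⟩

theorem idealToK_mono {I J : Ideal R} (h : I ≤ J) : idealToK K I ≤ idealToK K J :=
  Submodule.map_mono h

theorem one_notMem_idealToK {I : Ideal R} (hI : I ≠ ⊤) : (1 : K) ∉ idealToK K I := by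
  intro h
  rw [show (1 : K) = algebraMap R K 1 by simp, alg_mem_idealToK] at h
  exact hI ((Ideal.eq_top_iff_one I).2 (by simpa using h))

theorem mem_locSub {P : Ideal R} {hP : P.IsPrime} {x : K} :
    x ∈ locSub K P hP ↔ ∃ a s : R, s ∉ P ∧ x = algebraMap R K a * (algebraMap R K s)⁻¹ := by
  constructor
  · intro h
    obtain ⟨a, s, hs, rfl⟩ := h
    exact ⟨a, s, hs, by rw [IsFractionRing.mk'_eq_div, div_eq_mul_inv]⟩
  · rintro ⟨a, s, hs, rfl⟩
    exact ⟨a, s, hs, by rw [IsFractionRing.mk'_eq_div, div_eq_mul_inv]⟩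

end Aux

section Aux2

variable {R K : Type*} [CommRing R] [IsDomain R] [Field K] [Algebra R K] [IsFractionRing R K]

theorem alg_mem_locSub {P : Ideal R} {hP : P.IsPrime} (r : R) :
    algebraMap R K r ∈ locSub K P hP :=
  mem_locSub.2 ⟨r, 1, hP.ne_top ∘ (Ideal.eq_top_iff_one P).2, by simp⟩

theorem one_mem_locSub {P : Ideal R} {hP : P.IsPrime} : (1 : K) ∈ locSub K P hP := by
  simpa using alg_mem_locSub (K := K) (hP := hP) 1

theorem alg_ne_zero {s : R} (hs : s ≠ 0) : algebraMap R K s ≠ 0 := by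
  intro h
  exact hs (alg_inj (show algebraMap R K s = algebraMap R K 0 by rw [map_zero]; exact h))

theorem ne_zero_of_notMem {P : Ideal R} {s : R} (hs : s ∉ P) : algebraMap R K s ≠ 0 :=
  alg_ne_zero (fun h0 => hs (h0 ▸ P.zero_mem))

theorem inv_mem_locSub {P : Ideal R} {hP : P.IsPrime} {s : R} (hs : s ∉ P) :
    (algebraMap R K s)⁻¹ ∈ locSub K P hP :=
  mem_locSub.2 ⟨1, s, hs, by simp⟩

theorem mul_mem_locSub {P : Ideal R} {hP : P.IsPrime} {x y : K}
    (hx : x ∈ locSub K P hP) (hy : y ∈ locSub K P hP) : x * y ∈ locSub K P hP :=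
  Subalgebra.mul_mem _ hx hy

/-- common denominator form for elements of `I·R_P`. -/
theorem mem_idealToK_mul_locSub {P : Ideal R} {hP : P.IsPrime} {I : Ideal R} {x : K} :
    x ∈ idealToK K I * locSub K P hP ↔
      ∃ a ∈ I, ∃ s ∉ P, x = algebraMap R K a * (algebraMap R K s)⁻¹ := by
  constructor
  · intro h
    refine Submodule.mul_induction_on h ?_ ?_
    · intro m hm n hn
      obtain ⟨a, ha, rfl⟩ := mem_idealToK.1 hm
      obtain ⟨c, s, hs, rfl⟩ := mem_locSub.1 hn
      exact ⟨a * c, I.mul_mem_right c ha, s, hs, by rw [map_mul]; ring⟩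
    · rintro x y ⟨a₁, ha₁, s₁, hs₁, rfl⟩ ⟨a₂, ha₂, s₂, hs₂, rfl⟩
      refine ⟨a₁ * s₂ + a₂ * s₁, Ideal.add_mem _ (I.mul_mem_right _ ha₁) (I.mul_mem_right _ ha₂),
        s₁ * s₂, fun h => (hP.mem_or_mem h).elim hs₁ hs₂, ?_⟩
      have h1 := ne_zero_of_notMem (K := K) hs₁
      have h2 := ne_zero_of_notMem (K := K) hs₂
      field_simp [map_add, map_mul]
      simp only [map_add, map_mul]; ring
  · rintro ⟨a, ha, s, hs, rfl⟩
    exact Submodule.mul_mem_mul (alg_mem_idealToK.2 ha) (inv_mem_locSub hs)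

theorem le_mul_locSub {P : Ideal R} {hP : P.IsPrime} {N : Submodule R K} :
    N ≤ N * locSub K P hP := by
  intro x hx
  simpa using Submodule.mul_mem_mul hx (one_mem_locSub (hP := hP))


/-- contraction of `L·R_P` to `R` for `L` "primary-like" w.r.t. `P`. -/
theorem idealToK_mul_locSub_inf_one {P : Ideal R} {hP : P.IsPrime} {L : Ideal R}
    (hprim : ∀ r s : R, r * s ∈ L → s ∉ P → r ∈ L) :
    idealToK K L * locSub K P hP ⊓ 1 = idealToK K L := by
  apply le_antisymm
  · rintro x ⟨hx1, hx2⟩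
    obtain ⟨r, rfl⟩ := Submodule.mem_one.1 hx2
    obtain ⟨a, ha, s, hs, hx⟩ := mem_idealToK_mul_locSub.1 hx1
    have hsne := ne_zero_of_notMem (K := K) hs
    have : algebraMap R K (r * s) = algebraMap R K a := by
      rw [map_mul, hx]
      field_simp
    have hrs : r * s ∈ L := by rw [alg_inj this]; exact ha
    exact alg_mem_idealToK.2 (hprim r s hrs hs)
  · intro x hx
    exact ⟨le_mul_locSub hx, idealToK_le_one L hx⟩

end Aux2

section Aux3

variable {R K : Type*} [CommRing R] [IsDomain R] [Field K] [Algebra R K] [IsFractionRing R K]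

theorem mem_smul_iff {x z : K} {N : Submodule R K} : z ∈ x • N ↔ ∃ n ∈ N, x * n = z := by
  rw [← Submodule.span_singleton_mul]; exact Submodule.mem_span_singleton_mul

theorem smul_mul_assoc' (x : K) (N M : Submodule R K) : (x • N) * M = x • (N * M) := by
  rw [← Submodule.span_singleton_mul, ← Submodule.span_singleton_mul, mul_assoc]

theorem idealToK_top : idealToK K (⊤ : Ideal R) = 1 := by
  ext z
  simp [mem_idealToK, Submodule.mem_one, eq_comm]

theorem one_mem_one : (1 : K) ∈ (1 : Submodule R K) := Submodule.mem_one.2 ⟨1, map_one _⟩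

/-- The key colon identity: `L_K ⊓ r•R = r • (L : r)_K`. -/
theorem idealToK_inf_smul_one (L : Ideal R) (r : R) :
    idealToK K L ⊓ (algebraMap R K r) • (1 : Submodule R K) =
      (algebraMap R K r) • idealToK K (L.colon (Ideal.span {r})) := by
  ext z
  simp only [Submodule.mem_inf, mem_smul_iff]
  constructor
  · rintro ⟨hz1, n, hn, rfl⟩
    obtain ⟨c, rfl⟩ := Submodule.mem_one.1 hn
    rw [← map_mul] at hz1
    have hrc : r * c ∈ L := alg_mem_idealToK.1 hz1
    exact ⟨algebraMap R K c, alg_mem_idealToK.2 (Ideal.mem_colon_span_singleton.2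
      (by rwa [mul_comm] at hrc)), rfl⟩
  · rintro ⟨n, hn, rfl⟩
    obtain ⟨c, hc, rfl⟩ := mem_idealToK.1 hn
    have hc' : c * r ∈ L := Ideal.mem_colon_span_singleton.1 hc
    exact ⟨by rw [← map_mul]; exact alg_mem_idealToK.2 (by rwa [mul_comm] at hc'),
      ⟨algebraMap R K c, Submodule.mem_one.2 ⟨c, rfl⟩, rfl⟩⟩

end Aux3

section Aux4

variable {R K : Type*} [CommRing R] [IsDomain R] [Field K] [Algebra R K] [IsFractionRing R K]
variable {f : Submodule R K → Submodule R K}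
  (hf : IsSemistarOperation K f) (hst : IsStableOperation K f)

include hf hst in
/-- The fundamental colon characterization of membership in `f` for stable operations. -/
theorem fcolon (L : Ideal R) (r : R) :
    algebraMap R K r ∈ f (idealToK K L) ↔
      (1 : K) ∈ f (idealToK K (L.colon (Ideal.span {r}))) := by
  obtain ⟨hext, hidem, hmono, hsmul⟩ := hf
  set x := algebraMap R K r with hxdef
  constructor
  · intro hx
    by_cases hr : r = 0
    · subst hr
      have hcol : L.colon (Ideal.span {(0 : R)}) = ⊤ := by
        rw [Ideal.eq_top_iff_one, Ideal.mem_colon_span_singleton, mul_zero]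
        exact L.zero_mem
      rw [hcol, idealToK_top]
      exact hext 1 one_mem_one
    · have hx0 : x ≠ 0 := alg_ne_zero hr
      have h1 : x ∈ f (idealToK K L) ⊓ x • f 1 :=
        ⟨hx, mem_smul_iff.2 ⟨1, hext 1 one_mem_one, mul_one x⟩⟩
      rw [← hsmul x 1, ← hst, idealToK_inf_smul_one, hsmul] at h1
      obtain ⟨n, hn, hxn⟩ := mem_smul_iff.1 h1
      have hn1 : n = 1 := by
        have := mul_left_cancel₀ hx0 (hxn.trans (mul_one x).symm)
        exact this
      rwa [hn1] at hn
  · intro h1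
    have hx : x ∈ x • f (idealToK K (L.colon (Ideal.span {r}))) :=
      mem_smul_iff.2 ⟨1, h1, mul_one x⟩
    rw [← hsmul, ← idealToK_inf_smul_one] at hx
    exact hmono _ _ inf_le_left hx

include hf hst in
/-- Dichotomy: a prime not in the "filter" of `f` is `f`-closed. -/
theorem prime_closed {P : Ideal R} (hP : P.IsPrime) (h1 : (1 : K) ∉ f (idealToK K P)) :
    f (idealToK K P) ⊓ 1 = idealToK K P := by
  apply le_antisymm
  · rintro x ⟨hx1, hx2⟩
    obtain ⟨r, rfl⟩ := Submodule.mem_one.1 hx2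
    rw [alg_mem_idealToK]
    by_contra hr
    have hcol : P.colon (Ideal.span {r}) = P := by
      ext y
      rw [Ideal.mem_colon_span_singleton]
      exact ⟨fun h => (hP.mem_or_mem h).resolve_right hr, fun h => P.mul_mem_right r h⟩
    have := (fcolon hf hst P r).1 hx1
    rw [hcol] at this
    exact h1 this
  · exact le_inf (hf.1 _) (idealToK_le_one P)

include hf in
theorem one_mem_f_mul {A B : Submodule R K} (hA : (1 : K) ∈ f A) (hB : (1 : K) ∈ f B) :
    (1 : K) ∈ f (A * B) := by
  obtain ⟨hext, hidem, hmono, hsmul⟩ := hf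
  have hAle : A ≤ f (A * B) := by
    intro x hx
    have h1 : x ∈ x • f B := mem_smul_iff.2 ⟨1, hB, mul_one x⟩
    rw [← hsmul] at h1
    refine hmono _ _ ?_ h1
    rw [← Submodule.span_singleton_mul]
    exact mul_le_mul_left (Submodule.span_le.2 (by simpa using hx)) _
  have h2 := hmono _ _ hAle
  rw [hidem] at h2
  exact h2 hA

include hf in
theorem one_mem_f_pow {A : Submodule R K} (hA : (1 : K) ∈ f A) (n : ℕ) :
    (1 : K) ∈ f (A ^ n) := by
  induction n with
  | zero => exact hf.1 _ (by rw [pow_zero]; exact one_mem_one)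
  | succ n ih => rw [pow_succ]; exact one_mem_f_mul hf ih hA

theorem pow_le_one'' {A : Submodule R K} (hA : A ≤ 1) (n : ℕ) : A ^ n ≤ 1 := by
  induction n with
  | zero => rw [pow_zero]
  | succ n ih =>
    rw [pow_succ]
    calc A ^ n * A ≤ 1 * 1 := mul_le_mul' ih hA
    _ = 1 := mul_one 1

include hf hst in
/-- From a primary non-filter ideal, produce an `f`-closed primary ideal with the same radical. -/
theorem primary_step {L P : Ideal R} (hL : L.IsPrimary) (hrad : L.radical = P)
    (h1 : (1 : K) ∉ f (idealToK K L)) :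
    ∃ L' : Ideal R, L'.IsPrimary ∧ L'.radical = P ∧
      f (idealToK K L') ⊓ 1 = idealToK K L' := by
  set L' : Ideal R := (f (idealToK K L) ⊓ 1).comap (Algebra.linearMap R K) with hL'def
  have hmem : ∀ r : R, r ∈ L' ↔ algebraMap R K r ∈ f (idealToK K L) := by
    intro r
    rw [hL'def, Submodule.mem_comap]
    simp only [Algebra.linearMap_apply, Submodule.mem_inf]
    exact ⟨fun h => h.1, fun h => ⟨h, Submodule.mem_one.2 ⟨r, rfl⟩⟩⟩
  have hAL' : idealToK K L' = f (idealToK K L) ⊓ 1 := by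
    rw [hL'def, idealToK, Submodule.map_comap_eq, ← Submodule.one_eq_range]
    exact inf_eq_right.2 inf_le_right
  have hLL' : L ≤ L' := fun r hr => (hmem r).2 (hf.1 _ (alg_mem_idealToK.2 hr))
  have hL'P : L' ≤ P := by
    intro r hr
    by_contra hrP
    have hcol : L.colon (Ideal.span {r}) = L := by
      ext y
      rw [Ideal.mem_colon_span_singleton]
      refine ⟨fun h => ?_, fun h => L.mul_mem_right r h⟩
      rcases (Ideal.isPrimary_iff.1 hL).2 h with h' | h'
      · exact h'
      · exact absurd (hrad ▸ h') hrP
    have := (fcolon hf hst L r).1 ((hmem r).1 hr)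
    rw [hcol] at this
    exact absurd this h1
  have hradL' : L'.radical = P := by
    apply le_antisymm
    · calc L'.radical ≤ P.radical := Ideal.radical_mono hL'P
      _ = L.radical.radical := by rw [hrad]
      _ = L.radical := Ideal.radical_idem L
      _ = P := hrad
    · exact hrad ▸ Ideal.radical_mono hLL'
  have hne : L' ≠ ⊤ := by
    intro h
    have : (1 : R) ∈ L' := h ▸ Submodule.mem_top
    exact h1 (by simpa using (hmem 1).1 this)
  have hprimary : L'.IsPrimary := by
    rw [Ideal.isPrimary_iff]
    refine ⟨hne, fun {a b} hab => ?_⟩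
    by_cases hb : b ∈ P
    · exact Or.inr (hradL' ▸ hb)
    refine Or.inl ?_
    have hcolb : ∀ y : R, y * b ∈ L → y ∈ L := by
      intro y h
      rcases (Ideal.isPrimary_iff.1 hL).2 h with h' | h'
      · exact h'
      · exact absurd (hrad ▸ h') hb
    have hcol : L.colon (Ideal.span {a * b}) = L.colon (Ideal.span {a}) := by
      ext y
      rw [Ideal.mem_colon_span_singleton, Ideal.mem_colon_span_singleton]
      constructor
      · intro h
        exact hcolb _ (by rwa [← mul_assoc] at h)
      · intro h
        rw [← mul_assoc]
        exact L.mul_mem_right b h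
    have h2 := (fcolon hf hst L (a * b)).1 ((hmem (a * b)).1 hab)
    rw [hcol] at h2
    exact (hmem a).2 ((fcolon hf hst L a).2 h2)
  have hfL' : f (idealToK K L') = f (idealToK K L) := by
    apply le_antisymm
    · have : idealToK K L' ≤ f (idealToK K L) := hAL' ▸ inf_le_left
      have h2 := hf.2.2.1 _ _ this
      rwa [hf.2.1] at h2
    · exact hf.2.2.1 _ _ (idealToK_mono hLL')
  exact ⟨L', hprimary, hradL', by rw [hfL', ← hAL']⟩

end Aux4

section Aux5

variable {R K : Type*} [CommRing R] [IsDomain R] [Field K] [Algebra R K] [IsFractionRing R K]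

theorem locSub_mul_self {P : Ideal R} {hP : P.IsPrime} :
    locSub K P hP * locSub K P hP = locSub K P hP :=
  le_antisymm (Submodule.mul_le.2 fun _ hm _ hn => mul_mem_locSub hm hn) le_mul_locSub

theorem AP_mul_locSub_le {P I : Ideal R} {hP : P.IsPrime} :
    idealToK K I * locSub K P hP ≤ locSub K P hP :=
  Submodule.mul_le.2 fun m hm n hn => by
    obtain ⟨a, _, rfl⟩ := mem_idealToK.1 hm
    exact mul_mem_locSub (alg_mem_locSub a) hn

/-- The key valuation dichotomy for Prüfer domains. -/
theorem val_dichotomy (hR : IsPruferDomain (R := R) K) {P : Ideal R} (hP : P.IsPrime) (z : K) :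
    z ∈ locSub K P hP ∨ z⁻¹ ∈ idealToK K P * locSub K P hP := by
  obtain ⟨a, b, hb, hz⟩ := IsFractionRing.div_surjective (A := R) z
  have hb0 : b ≠ 0 := nonZeroDivisors.ne_zero hb
  by_cases ha : a = 0
  · left
    rw [← hz, ha, map_zero, zero_div]
    exact Submodule.zero_mem _
  have hz0 : z ≠ 0 := by
    rw [← hz]
    exact div_ne_zero (alg_ne_zero ha) (alg_ne_zero hb0)
  set I : Ideal R := Ideal.span {a, b} with hIdef
  have haI : a ∈ I := Ideal.subset_span (by simp)
  have hbI : b ∈ I := Ideal.subset_span (by simp)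
  have hIbot : I ≠ ⊥ := fun h => ha (by have := haI; rw [h] at this; simpa using this)
  obtain ⟨J, hJ⟩ := hR I hIbot (Submodule.fg_span ((Set.finite_singleton b).insert a))
  have hsplit : idealToK K I * J = (algebraMap R K a) • J ⊔ (algebraMap R K b) • J := by
    rw [hIdef, idealToK, ← Ideal.submodule_span_eq, Submodule.map_span,
      Set.image_insert_eq, Set.image_singleton, Algebra.linearMap_apply, Algebra.linearMap_apply,
      Submodule.span_insert, Submodule.sup_mul, Submodule.span_singleton_mul,
      Submodule.span_singleton_mul]
  have h1 : (1 : K) ∈ (algebraMap R K a) • J ⊔ (algebraMap R K b) • J := by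
    rw [← hsplit, hJ]; exact one_mem_one
  obtain ⟨u, hu, w, hw, huw⟩ := Submodule.mem_sup.1 h1
  obtain ⟨x, hx, rfl⟩ := mem_smul_iff.1 hu
  obtain ⟨y, hy, rfl⟩ := mem_smul_iff.1 hw
  -- products are in R
  have hx1 : ∃ r : R, algebraMap R K r = algebraMap R K a * x := by
    have : algebraMap R K a * x ∈ idealToK K I * J :=
      Submodule.mul_mem_mul (alg_mem_idealToK.2 haI) hx
    rw [hJ] at this; exact Submodule.mem_one.1 this
  have hx2 : ∃ r : R, algebraMap R K r = algebraMap R K b * x := by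
    have : algebraMap R K b * x ∈ idealToK K I * J :=
      Submodule.mul_mem_mul (alg_mem_idealToK.2 hbI) hx
    rw [hJ] at this; exact Submodule.mem_one.1 this
  have hy1 : ∃ r : R, algebraMap R K r = algebraMap R K a * y := by
    have : algebraMap R K a * y ∈ idealToK K I * J :=
      Submodule.mul_mem_mul (alg_mem_idealToK.2 haI) hy
    rw [hJ] at this; exact Submodule.mem_one.1 this
  obtain ⟨r₁, hr₁⟩ := hx1
  obtain ⟨c, hc⟩ := hx2
  obtain ⟨d, hd⟩ := hy1
  have hr₂ : ∃ r : R, algebraMap R K r = algebraMap R K b * y := by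
    have : algebraMap R K b * y ∈ idealToK K I * J :=
      Submodule.mul_mem_mul (alg_mem_idealToK.2 hbI) hy
    rw [hJ] at this; exact Submodule.mem_one.1 this
  obtain ⟨r₂, hr₂⟩ := hr₂
  have hsum : r₁ + r₂ = 1 := by
    apply alg_inj (K := K)
    rw [map_add, map_one, hr₁, hr₂, huw]
  by_cases hr2P : r₂ ∈ P
  · -- then r₁ ∉ P
    have hr1P : r₁ ∉ P := by
      intro h
      exact hP.ne_top ((Ideal.eq_top_iff_one P).2 (hsum ▸ P.add_mem h hr2P))
    have hx0 : x ≠ 0 := by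
      rintro rfl
      apply hr1P
      have : r₁ = 0 := alg_inj (K := K) (by rw [hr₁, mul_zero, map_zero])
      rw [this]; exact P.zero_mem
    have hzinv : z⁻¹ = algebraMap R K c * (algebraMap R K r₁)⁻¹ := by
      rw [← hz, hc, hr₁]
      have hA := alg_ne_zero (K := K) ha
      have hB := alg_ne_zero (K := K) hb0
      field_simp
    by_cases hcP : c ∈ P
    · right
      rw [hzinv]
      exact Submodule.mul_mem_mul (alg_mem_idealToK.2 hcP) (inv_mem_locSub hr1P)
    · left
      have : z = algebraMap R K r₁ * (algebraMap R K c)⁻¹ := by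
        rw [← inv_inv z, hzinv]
        rw [mul_inv, inv_inv]
        ring
      exact mem_locSub.2 ⟨r₁, c, hcP, this⟩
  · -- r₂ ∉ P : z ∈ V
    left
    have hy0 : y ≠ 0 := by
      rintro rfl
      apply hr2P
      have : r₂ = 0 := alg_inj (K := K) (by rw [hr₂, mul_zero, map_zero])
      rw [this]; exact P.zero_mem
    have : z = algebraMap R K d * (algebraMap R K r₂)⁻¹ := by
      rw [← hz, hd, hr₂]
      have hB := alg_ne_zero (K := K) hb0
      field_simp
    exact mem_locSub.2 ⟨d, r₂, hr2P, this⟩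

theorem val_dichotomy' (hR : IsPruferDomain (R := R) K) {P : Ideal R} (hP : P.IsPrime) (z : K) :
    z ∈ locSub K P hP ∨ z⁻¹ ∈ locSub K P hP :=
  (val_dichotomy hR hP z).imp id (fun h => AP_mul_locSub_le h)

/-- chain comparison: if `x ∉ N` and `N` is a `V`-module then `N ≤ xV`. -/
theorem chain_le (hR : IsPruferDomain (R := R) K) {P : Ideal R} (hP : P.IsPrime)
    {N : Submodule R K} (hNV : N * locSub K P hP ≤ N) {x : K} (hx : x ∉ N) :
    N ≤ x • locSub K P hP := by
  intro n hn
  by_cases hn0 : n = 0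
  · exact mem_smul_iff.2 ⟨0, Submodule.zero_mem _, by rw [hn0, mul_zero]⟩
  have hx0 : x ≠ 0 := fun h => hx (h ▸ N.zero_mem)
  rcases val_dichotomy' hR hP (x⁻¹ * n) with hw | hw
  · exact mem_smul_iff.2 ⟨x⁻¹ * n, hw, by field_simp⟩
  · exfalso
    apply hx
    have hxe : x = n * (x⁻¹ * n)⁻¹ := by
      field_simp
    rw [hxe]
    exact hNV (Submodule.mul_mem_mul hn hw)

theorem smul_locSub_of_unit {P : Ideal R} {hP : P.IsPrime} {s : R} (hs : s ∉ P) :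
    (algebraMap R K s)⁻¹ • locSub K P hP = locSub K P hP := by
  have hs0 := ne_zero_of_notMem (K := K) hs
  apply le_antisymm
  · rintro z hz
    obtain ⟨v, hv, rfl⟩ := mem_smul_iff.1 hz
    exact mul_mem_locSub (inv_mem_locSub hs) hv
  · intro v hv
    exact mem_smul_iff.2 ⟨algebraMap R K s * v, mul_mem_locSub (alg_mem_locSub s) hv, by
      field_simp⟩

theorem smul_pow_locSub {P : Ideal R} {hP : P.IsPrime} (c : K) {n : ℕ} (hn : n ≠ 0) :
    (c • locSub K P hP) ^ n = c ^ n • locSub K P hP := by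
  induction n with
  | zero => exact absurd rfl hn
  | succ n ih =>
    by_cases h0 : n = 0
    · subst h0; rw [pow_one, pow_one]
    · rw [pow_succ, ih h0, smul_mul_assoc', mul_comm (locSub K P hP) (c • locSub K P hP),
        smul_mul_assoc', locSub_mul_self, smul_smul, ← pow_succ]

theorem pow_mono' {A B : Submodule R K} (h : A ≤ B) (n : ℕ) : A ^ n ≤ B ^ n := by
  induction n with
  | zero => rw [pow_zero, pow_zero]
  | succ n ih => rw [pow_succ, pow_succ]; exact mul_le_mul' ih h

end Aux5

section Aux6

variable {R K : Type*} [CommRing R] [IsDomain R] [Field K] [Algebra R K] [IsFractionRing R K]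
variable {f : Submodule R K → Submodule R K}
  (hf : IsSemistarOperation K f) (hst : IsStableOperation K f)

theorem le_vOp {P : Ideal R} (hP : P.IsPrime) (I : Submodule R K) : I ≤ vOp K P hP I := by
  intro x hx
  rw [vOp, Submodule.mem_div_iff_forall_mul_mem]
  intro y hy
  rw [mul_comm]
  exact Submodule.mem_div_iff_forall_mul_mem.1 hy x (le_mul_locSub hx)

theorem normStable_ext (I : Submodule R K) : I ≤ normStable K f I :=
  le_inf (le_iInf fun _ => le_mul_locSub) (le_iInf fun P => le_vOp P.2.1 I)

theorem normStable_le_q {P : Ideal R} (hQ : P ∈ QSpec K f) (I : Submodule R K) :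
    normStable K f I ≤ I * locSub K P hQ.1 :=
  inf_le_left.trans (iInf_le _ (⟨P, hQ⟩ : QSpec K f))

theorem normStable_le_ps {P : Ideal R} (hPs : P ∈ PsSpec K f) (I : Submodule R K) :
    normStable K f I ≤ vOp K P hPs.1 I :=
  inf_le_right.trans (iInf_le _ (⟨P, hPs⟩ : PsSpec K f))

theorem one_le_of_one_mem {N : Submodule R K} (h : (1 : K) ∈ N) : (1 : Submodule R K) ≤ N := by
  intro x hx
  obtain ⟨r, rfl⟩ := Submodule.mem_one.1 hx
  rw [Algebra.algebraMap_eq_smul_one]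
  exact N.smul_mem r h

include hf in
theorem dir1_qspec {J P : Ideal R} (hQ : P ∈ QSpec K f)
    (hJ : (1 : K) ∈ f (idealToK K J)) : (1 : K) ∈ idealToK K J * locSub K P hQ.1 := by
  obtain ⟨hP, hq⟩ := hQ
  by_cases hJP : J ≤ P
  · exfalso
    have h1 : (1 : K) ∈ f (idealToK K P) ⊓ 1 :=
      ⟨hf.2.2.1 _ _ (idealToK_mono hJP) hJ, one_mem_one⟩
    rw [hq] at h1
    exact one_notMem_idealToK hP.ne_top h1
  · obtain ⟨j, hjJ, hjP⟩ := SetLike.not_le_iff_exists.1 hJP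
    have h0 : algebraMap R K j ≠ 0 := ne_zero_of_notMem hjP
    rw [show (1 : K) = algebraMap R K j * (algebraMap R K j)⁻¹ from (mul_inv_cancel₀ h0).symm]
    exact Submodule.mul_mem_mul (alg_mem_idealToK.2 hjJ) (inv_mem_locSub hjP)

include hf in
theorem dir1_psspec (hR : IsPruferDomain (R := R) K) {J P : Ideal R} (hPs : P ∈ PsSpec K f)
    (hJ : (1 : K) ∈ f (idealToK K J)) : (1 : K) ∈ vOp K P hPs.1 (idealToK K J) := by
  obtain ⟨hP, hpf, L, hL, hrad, hLcl⟩ := hPs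
  have hprim : ∀ u s : R, u * s ∈ L → s ∉ P → u ∈ L := fun u s h hs =>
    ((Ideal.isPrimary_iff.1 hL).2 h).resolve_right (fun h' => hs (hrad ▸ h'))
  rw [vOp, Submodule.mem_div_iff_forall_mul_mem]
  intro z hz
  rw [one_mul]
  by_contra hzV
  rw [Submodule.mem_div_iff_forall_mul_mem] at hz
  rcases val_dichotomy hR hP z with h | hinv
  · exact hzV h
  have hz0 : z ≠ 0 := by
    rintro rfl
    exact hzV (Submodule.zero_mem _)
  obtain ⟨p, hp, s, hs, hzinv⟩ := mem_idealToK_mul_locSub.1 hinv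
  have hp0 : p ≠ 0 := by
    rintro rfl
    rw [map_zero, zero_mul] at hzinv
    exact inv_ne_zero hz0 hzinv
  have hpL : p ∈ L.radical := hrad.symm ▸ hp
  obtain ⟨n, hpn⟩ := hpL
  have hn0 : n ≠ 0 := by
    rintro rfl
    exact (Ideal.isPrimary_iff.1 hL).1 ((Ideal.eq_top_iff_one L).2 (by simpa using hpn))
  -- J_K ≤ z⁻¹ • V
  have hAJ : idealToK K J ≤ z⁻¹ • locSub K P hP := by
    intro y hy
    exact mem_smul_iff.2 ⟨z * y, hz _ (le_mul_locSub hy), by field_simp⟩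
  -- (J_K)^n ≤ alg (p^n) • V
  have hs0 : algebraMap R K s ≠ 0 := ne_zero_of_notMem hs
  have hzn : (z⁻¹ • locSub K P hP) ^ n = algebraMap R K (p ^ n) • locSub K P hP := by
    rw [smul_pow_locSub _ hn0, hzinv, mul_pow, inv_pow, ← map_pow, ← map_pow, ← smul_smul,
      smul_locSub_of_unit (fun h => hs (hP.mem_of_pow_mem n h))]
  have hpow : idealToK K J ^ n ≤ algebraMap R K (p ^ n) • locSub K P hP := by
    rw [← hzn]
    exact pow_mono' hAJ n
  have hprinc : algebraMap R K (p ^ n) • locSub K P hP ⊓ 1 ≤ idealToK K L := by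
    rintro w ⟨hw1, hw2⟩
    obtain ⟨r, rfl⟩ := Submodule.mem_one.1 hw2
    obtain ⟨v, hv, hveq⟩ := mem_smul_iff.1 hw1
    obtain ⟨c, t, ht, rfl⟩ := mem_locSub.1 hv
    have ht0 : algebraMap R K t ≠ 0 := ne_zero_of_notMem ht
    have hkey : r * t = p ^ n * c := by
      apply alg_inj (K := K)
      rw [map_mul, map_mul, ← hveq]
      field_simp
    exact alg_mem_idealToK.2 (hprim r t (hkey ▸ L.mul_mem_right c hpn) ht)
  have h1n : (1 : K) ∈ f (idealToK K J ^ n) := one_mem_f_pow hf hJ n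
  have hfin : (1 : K) ∈ f (idealToK K L) ⊓ 1 :=
    ⟨hf.2.2.1 _ _ ((le_inf hpow (pow_le_one'' (idealToK_le_one J) n)).trans hprinc) h1n,
      one_mem_one⟩
  rw [hLcl] at hfin
  exact one_notMem_idealToK (Ideal.isPrimary_iff.1 hL).1 hfin

include hf in
theorem dir1 (hR : IsPruferDomain (R := R) K) {J : Ideal R}
    (hJ : (1 : K) ∈ f (idealToK K J)) : (1 : K) ∈ normStable K f (idealToK K J) := by
  refine Submodule.mem_inf.2 ⟨Submodule.mem_iInf _ |>.2 fun P => ?_,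
    Submodule.mem_iInf _ |>.2 fun P => ?_⟩
  · exact dir1_qspec hf P.2 hJ
  · exact dir1_psspec hf hR P.2 hJ

end Aux6

section Aux7

variable {R K : Type*} [CommRing R] [IsDomain R] [Field K] [Algebra R K] [IsFractionRing R K]
variable {f : Submodule R K → Submodule R K}
  (hf : IsSemistarOperation K f) (hst : IsStableOperation K f)

include hf hst in
/-- For a `P`-primary `f`-closed ideal `L` with `1 ∈ f(P_K)`, the `v_P`-closure of `L R_P`
contracts to `L` in `R`. -/
theorem vcontract (hR : IsPruferDomain (R := R) K) {P L : Ideal R} (hP : P.IsPrime)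
    (hPF : (1 : K) ∈ f (idealToK K P)) (hL : L.IsPrimary) (hrad : L.radical = P)
    (hLcl : f (idealToK K L) ⊓ 1 = idealToK K L) :
    vOp K P hP (idealToK K L) ⊓ 1 = idealToK K L := by
  have hprim : ∀ u s : R, u * s ∈ L → s ∉ P → u ∈ L := fun u s h hs =>
    ((Ideal.isPrimary_iff.1 hL).2 h).resolve_right (fun h' => hs (hrad ▸ h'))
  apply le_antisymm
  · rintro x ⟨hx1, hx2⟩
    obtain ⟨r, rfl⟩ := Submodule.mem_one.1 hx2
    by_cases hr0 : r = 0
    · subst hr0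
      rw [map_zero]
      exact Submodule.zero_mem _
    have hrne : algebraMap R K r ≠ 0 := alg_ne_zero hr0
    -- P ≤ (L : r)
    have hcolP : P ≤ L.colon (Ideal.span {r}) := by
      intro t ht
      rw [Ideal.mem_colon_span_singleton]
      by_cases ht0 : t = 0
      · subst ht0; rw [zero_mul]; exact L.zero_mem
      have htne : algebraMap R K t ≠ 0 := alg_ne_zero ht0
      have htx : algebraMap R K t * algebraMap R K r ∈ idealToK K L * locSub K P hP := by
        by_contra hnot
        have hVmod : idealToK K L * locSub K P hP * locSub K P hP ≤
            idealToK K L * locSub K P hP := by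
          rw [mul_assoc, locSub_mul_self]
        have hle := chain_le hR hP hVmod hnot
        set w := (algebraMap R K t * algebraMap R K r)⁻¹ with hwdef
        have hw : w ∈ locSub K P hP / (idealToK K L * locSub K P hP) := by
          rw [Submodule.mem_div_iff_forall_mul_mem]
          intro y hy
          obtain ⟨v, hv, rfl⟩ := mem_smul_iff.1 (hle hy)
          have : w * (algebraMap R K t * algebraMap R K r * v) = v := by
            rw [hwdef]
            field_simp
          rw [this]
          exact hv
        have hxw := Submodule.mem_div_iff_forall_mul_mem.1 hx1 w hw
        have hxwe : algebraMap R K r * w = (algebraMap R K t)⁻¹ := by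
          rw [hwdef]
          field_simp
        rw [hxwe] at hxw
        obtain ⟨c, s, hsP, hc⟩ := mem_locSub.1 hxw
        have hs0 : algebraMap R K s ≠ 0 := ne_zero_of_notMem hsP
        have hse : algebraMap R K s = algebraMap R K (t * c) := by
          rw [map_mul]
          field_simp at hc
          linear_combination hc
        exact hsP (by rw [alg_inj hse]; exact P.mul_mem_right c ht)
      have : algebraMap R K (t * r) ∈ idealToK K L * locSub K P hP ⊓ 1 := by
        rw [map_mul]
        exact ⟨htx, Submodule.mem_one.2 ⟨t * r, by rw [map_mul]⟩⟩
      rw [idealToK_mul_locSub_inf_one hprim] at this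
      exact alg_mem_idealToK.1 this
    have h1c : (1 : K) ∈ f (idealToK K (L.colon (Ideal.span {r}))) :=
      hf.2.2.1 _ _ (idealToK_mono hcolP) hPF
    have hmem : algebraMap R K r ∈ f (idealToK K L) ⊓ 1 :=
      ⟨(fcolon hf hst L r).2 h1c, Submodule.mem_one.2 ⟨r, rfl⟩⟩
    rw [hLcl] at hmem
    exact hmem
  · exact le_inf (le_vOp hP _) (idealToK_le_one L)

end Aux7




/-- Let `R` be a Prüfer domain and `⋆` a stable semistar operation with normalized stable
version `⋆̃`. Then `QSpec^⋆̃(R) = QSpec^⋆(R)`, `PsSpec^⋆̃(R) = PsSpec^⋆(R)`, and the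
normalized stable version of `⋆̃` equals `⋆̃`. -/
theorem normStable_spectra_eq {R K : Type*} [CommRing R] [IsDomain R] [Field K] [Algebra R K]
    [IsFractionRing R K]
    (hR : IsPruferDomain (R := R) K)
    (f : Submodule R K → Submodule R K) (hf : IsSemistarOperation K f)
    (hstable : IsStableOperation K f) :
    QSpec K (normStable K f) = QSpec K f ∧ PsSpec K (normStable K f) = PsSpec K f ∧
      normStable K (normStable K f) = normStable K f := by
  have hQ : QSpec K (normStable K f) = QSpec K f := by
    ext P
    constructor
    · rintro ⟨hP, hq⟩
      have h1g : (1 : K) ∉ normStable K f (idealToK K P) := by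
        intro h
        have h2 : (1 : K) ∈ idealToK K P := by
          rw [← hq]; exact Submodule.mem_inf.2 ⟨h, one_mem_one⟩
        exact one_notMem_idealToK hP.ne_top h2
      have h1f : (1 : K) ∉ f (idealToK K P) := fun h => h1g (dir1 hf hR h)
      exact ⟨hP, prime_closed hf hstable hP h1f⟩
    · rintro hQf
      have hP := hQf.1
      refine ⟨hP, le_antisymm ?_ (le_inf (normStable_ext _) (idealToK_le_one P))⟩
      have h1 : normStable K f (idealToK K P) ⊓ 1 ≤ idealToK K P * locSub K P hP ⊓ 1 :=
        inf_le_inf_right _ (normStable_le_q hQf _)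
      rwa [idealToK_mul_locSub_inf_one
        (fun u s h hs => (hP.mem_or_mem h).resolve_right hs)] at h1
  have hPsp : PsSpec K (normStable K f) = PsSpec K f := by
    ext P
    constructor
    · rintro ⟨hP, hpf, L, hL, hrad, hLcl⟩
      have h1f : (1 : K) ∈ f (idealToK K P) := by
        by_contra h1
        have hQf : P ∈ QSpec K f := ⟨hP, prime_closed hf hstable hP h1⟩
        have hle : normStable K f (idealToK K P) ⊓ 1 ≤
            idealToK K P * locSub K P hP ⊓ 1 :=
          inf_le_inf_right _ (normStable_le_q hQf _)
        rw [idealToK_mul_locSub_inf_one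
          (fun u s h hs => (hP.mem_or_mem h).resolve_right hs), hpf] at hle
        exact one_notMem_idealToK hP.ne_top (hle one_mem_one)
     -- L not in filter of f
      have h1L : (1 : K) ∉ f (idealToK K L) := by
        intro h
        have h2 : (1 : K) ∈ idealToK K L := by
          rw [← hLcl]; exact Submodule.mem_inf.2 ⟨dir1 hf hR h, one_mem_one⟩
        exact one_notMem_idealToK (Ideal.isPrimary_iff.1 hL).1 h2
      obtain ⟨L', hL', hrad', hLcl'⟩ := primary_step hf hstable hL hrad h1L
      exact ⟨hP, le_antisymm inf_le_right (le_inf (one_le_of_one_mem h1f) le_rfl),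
        L', hL', hrad', hLcl'⟩
    · rintro ⟨hP, hpf, L, hL, hrad, hLcl⟩
      have hPsf : P ∈ PsSpec K f := ⟨hP, hpf, L, hL, hrad, hLcl⟩
      have h1f : (1 : K) ∈ f (idealToK K P) := by
        have h2 : (1 : K) ∈ f (idealToK K P) ⊓ 1 := by rw [hpf]; exact one_mem_one
        exact h2.1
      have h1g : (1 : K) ∈ normStable K f (idealToK K P) := dir1 hf hR h1f
      refine ⟨hP, le_antisymm inf_le_right (le_inf (one_le_of_one_mem h1g) le_rfl),
        L, hL, hrad, ?_⟩
      apply le_antisymm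
      · have h2 : normStable K f (idealToK K L) ⊓ 1 ≤ vOp K P hP (idealToK K L) ⊓ 1 :=
          inf_le_inf_right _ (normStable_le_ps hPsf _)
        rwa [vcontract hf hstable hR hP h1f hL hrad hLcl] at h2
      · exact le_inf (normStable_ext _) (idealToK_le_one L)
  refine ⟨hQ, hPsp, ?_⟩
  have hQ' := Set.ext_iff.1 hQ
  have hPsp' := Set.ext_iff.1 hPsp
  funext I
  have e1 : (⨅ P : QSpec K (normStable K f), I * locSub K P.1 P.2.1) =
      (⨅ P : QSpec K f, I * locSub K P.1 P.2.1) := by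
    apply le_antisymm
    · exact le_iInf fun P => iInf_le_of_le ⟨P.1, (hQ' P.1).2 P.2⟩ le_rfl
    · exact le_iInf fun P => iInf_le_of_le ⟨P.1, (hQ' P.1).1 P.2⟩ le_rfl
  have e2 : (⨅ P : PsSpec K (normStable K f), vOp K P.1 P.2.1 I) =
      (⨅ P : PsSpec K f, vOp K P.1 P.2.1 I) := by
    apply le_antisymm
    · exact le_iInf fun P => iInf_le_of_le ⟨P.1, (hPsp' P.1).2 P.2⟩ le_rfl
    · exact le_iInf fun P => iInf_le_of_le ⟨P.1, (hPsp' P.1).1 P.2⟩ le_rfl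
  show (⨅ P : QSpec K (normStable K f), I * locSub K P.1 P.2.1) ⊓
      (⨅ P : PsSpec K (normStable K f), vOp K P.1 P.2.1 I) = normStable K f I
  rw [e1, e2]
  rfl
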